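/- Let g ≥ 2 be an integer, let a be a natural number, and let s : ℕ → ℕ be a function. Define the rational numbers σ = -((g+1)/(2g+1))·a + Σ_{h=1}^{⌊g/2⌋} (4h(g-h)/(2g+1) - 1)·(s h) and χ = a + Σ_{h=1}^{⌊g/2⌋} (s h). If a + Σ_{h=1}^{⌊g/2⌋} (s h) > 0, then 3σ + 2χ > 0. -/

import Mathlib

/-! Every vanishing cycle contributes positively to `3σ + 2χ`: a nonseparating one contributes
`(g - 1)/(2g + 1)`, and a separating one of type `h` contributes `(12h(g - h) - (2g + 1))/(2g + 1)`,
which is at least as large because `h(g - h) ≥ g/2` for `1 ≤ h ≤ g/2`. Hence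
`3σ + 2χ ≥ (g - 1)/(2g + 1) · χ > 0`. -/

section EndoCoefficients

variable {K : Type*} [Field K] [LinearOrder K] [IsStrictOrderedRing K]

theorem three_mul_nonseparating_coeff_add_two {g : K} (hg : 2 * g + 1 ≠ 0) :
    3 * -((g + 1) / (2 * g + 1)) + 2 = (g - 1) / (2 * g + 1) := by
  rw [eq_div_iff hg]
  linear_combination (-3 : K) * div_mul_cancel₀ (g + 1) hg

theorem le_three_mul_separating_coeff_add_two {g h : K} (h1 : 1 ≤ h) (h2 : 2 * h ≤ g) :
    (g - 1) / (2 * g + 1) ≤ 3 * (4 * h * (g - h) / (2 * g + 1) - 1) + 2 := by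
  have hD : 0 < 2 * g + 1 := by linarith
  have hgh : g - h ≤ h * (g - h) := le_mul_of_one_le_left (by linarith) h1
  have hsep : 3 * (4 * h * (g - h) / (2 * g + 1) - 1) + 2
      = (12 * h * (g - h) - (2 * g + 1)) / (2 * g + 1) := by
    rw [eq_div_iff hD.ne']
    linear_combination (3 : K) * div_mul_cancel₀ (4 * h * (g - h)) hD.ne'
  rw [hsep, div_le_div_iff_of_pos_right hD]
  linarith

end EndoCoefficients

theorem two_mul_cast_le_of_le_toNat_div_two {g : ℤ} (hg : 0 ≤ g) {h : ℕ} (hh : h ≤ g.toNat / 2) :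
    2 * (h : ℚ) ≤ g := by
  have : ((2 * h : ℕ) : ℤ) ≤ g := by omega
  exact_mod_cast this

theorem stmt_1 (g : ℤ) (hg : 2 ≤ g) (a : ℕ) (s : ℕ → ℕ)
    (σ χ : ℚ)
    (hσ : σ = -(((g : ℚ) + 1) / (2 * (g : ℚ) + 1)) * (a : ℚ) +
      ∑ h ∈ Finset.Icc 1 (g.toNat / 2),
        ((4 * (h : ℚ) * ((g : ℚ) - (h : ℚ))) / (2 * (g : ℚ) + 1) - 1) * (s h : ℚ))
    (hχ : χ = (a : ℚ) + ∑ h ∈ Finset.Icc 1 (g.toNat / 2), (s h : ℚ))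
    (hpos : 0 < a + ∑ h ∈ Finset.Icc 1 (g.toNat / 2), s h) :
    0 < 3 * σ + 2 * χ := by
  have hgq : (2 : ℚ) ≤ g := by exact_mod_cast hg
  have hc : 0 < ((g : ℚ) - 1) / (2 * g + 1) := div_pos (by linarith) (by linarith)
  have hχ_pos : 0 < χ := by rw [hχ]; exact_mod_cast hpos
  have h3σ2χ : 3 * σ + 2 * χ = (3 * -(((g : ℚ) + 1) / (2 * g + 1)) + 2) * a +
      ∑ h ∈ Finset.Icc 1 (g.toNat / 2),
        (3 * (4 * (h : ℚ) * (g - h) / (2 * g + 1) - 1) + 2) * s h := by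
    simp only [hσ, hχ, add_mul _ (2 : ℚ), Finset.sum_add_distrib, mul_assoc, ← Finset.mul_sum]
    ring
  calc 0 < ((g : ℚ) - 1) / (2 * g + 1) * χ := mul_pos hc hχ_pos
    _ ≤ 3 * σ + 2 * χ := by
      rw [h3σ2χ, hχ, mul_add, Finset.mul_sum,
        three_mul_nonseparating_coeff_add_two (by linarith)]
      gcongr with h hh
      rw [Finset.mem_Icc] at hh
      exact le_three_mul_separating_coeff_add_two (by exact_mod_cast hh.1)
        (two_mul_cast_le_of_le_toNat_div_two (by omega) hh.2)
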